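/- Let (X,d) be an unbounded metric space, p∈X, and let n≥2 be an integer. Then the inequality |V(G_{X,r̃})| ≤ n holds for every scaling sequence r̃ if and only if both of the following hold: (1) F_n(x_1,…,x_n) tends to 0 as max_{1≤k≤n} d(x_k,p) tends to ∞, where F_n(x_1,…,x_n) := (min_{1≤k≤n} d(x_k,p) · Π_{1≤k<l≤n} d(x_k,x_l)) / (max_{1≤k≤n} d(x_k,p))^{n(n−1)/2+1} for (x_1,…,x_n)≠(p,…,p) and F_n(p,…,p):=0; and (2) lim_{k→1⁺} limsup_{r→∞} diam(A(p,r,k))/r = limsup_{r→∞} diam(S(p,r))/r = 0, where A(p,r,k) = {x∈X : r/k ≤ d(x,p) ≤ rk} and S(p,r) = {x∈X : d(x,p)=r}, and diam(∅):=0. -/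

import Mathlib

open Filter Topology
open scoped Classical

/-- An unbounded metric space. -/
def UnboundedSpace (X : Type*) [MetricSpace X] : Prop :=
  ¬ Bornology.IsBounded (Set.univ : Set X)

/-- A scaling sequence: positive reals tending to infinity. -/
def ScalingSeq (r : ℕ → ℝ) : Prop :=
  (∀ n, 0 < r n) ∧ Filter.Tendsto r Filter.atTop Filter.atTop

/-- Two sequences are mutually stable w.r.t. `r` if `d(x_n, y_n)/r_n` has a finite limit. -/
def MutuallyStable {X : Type*} [MetricSpace X] (r : ℕ → ℝ) (x y : ℕ → X) : Prop :=
  ∃ L : ℝ, Filter.Tendsto (fun n => dist (x n) (y n) / r n) Filter.atTop (nhds L)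

/-- `Seq(X, r̃)`: sequences going to infinity such that `d(x_n, p)/r_n` has a finite limit. -/
def SeqInf {X : Type*} [MetricSpace X] (r : ℕ → ℝ) (p : X) : Set (ℕ → X) :=
  {x | Filter.Tendsto (fun n => dist (x n) p) Filter.atTop Filter.atTop ∧
    ∃ L : ℝ, Filter.Tendsto (fun n => dist (x n) p / r n) Filter.atTop (nhds L)}

/-- The relation `x̃ ≡ ỹ`, i.e. `d(x_n, y_n)/r_n → 0`. -/
def EquivSeq {X : Type*} [MetricSpace X] (r : ℕ → ℝ) (x y : ℕ → X) : Prop :=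
  Filter.Tendsto (fun n => dist (x n) (y n) / r n) Filter.atTop (nhds 0)

/-- The `≡`-equivalence class of `x` inside `Seq(X, r̃)`. -/
def classOf {X : Type*} [MetricSpace X] (r : ℕ → ℝ) (p : X) (x : ℕ → X) : Set (ℕ → X) :=
  {y | y ∈ SeqInf r p ∧ EquivSeq r x y}

/-- The vertex set of the cluster graph `G_{X, r̃}`: all `≡`-classes of `Seq(X, r̃)`. -/
def VertexSet {X : Type*} [MetricSpace X] (r : ℕ → ℝ) (p : X) : Set (Set (ℕ → X)) :=
  {v | ∃ x ∈ SeqInf r p, v = classOf r p x}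

/-- Adjacency in the cluster graph `G_{X, r̃}`: distinct classes whose representatives
are mutually stable. -/
def AdjacentCl {X : Type*} [MetricSpace X] (r : ℕ → ℝ) (p : X) (u v : Set (ℕ → X)) : Prop :=
  u ∈ VertexSet r p ∧ v ∈ VertexSet r p ∧ u ≠ v ∧
    ∀ x ∈ u, ∀ y ∈ v, MutuallyStable r x y

/-- The weight `ρ_X` on the cluster graph: for an edge `{u,v}` it is the (unique) limit
`lim d(x_n, y_n)/r_n` for representatives. -/
noncomputable def rhoX {X : Type*} [MetricSpace X] (r : ℕ → ℝ) (u v : Set (ℕ → X)) : ℝ :=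
  sSup {L : ℝ | ∃ x ∈ u, ∃ y ∈ v,
    Filter.Tendsto (fun n => dist (x n) (y n) / r n) Filter.atTop (nhds L)}

/-- The root `ν₀ = X̃⁰_{∞,r̃}`: sequences with `d(z_n,p) → ∞` and `d(z_n,p)/r_n → 0`. -/
def rootClass {X : Type*} [MetricSpace X] (r : ℕ → ℝ) (p : X) : Set (ℕ → X) :=
  {z | Filter.Tendsto (fun n => dist (z n) p) Filter.atTop Filter.atTop ∧
    Filter.Tendsto (fun n => dist (z n) p / r n) Filter.atTop (nhds 0)}

/-- The labeling `ρ⁰` of vertices: `ρ⁰(v) = lim d(x_n,p)/r_n` for `x̃ ∈ v`. -/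
noncomputable def rho0 {X : Type*} [MetricSpace X] (r : ℕ → ℝ) (p : X)
    (v : Set (ℕ → X)) : ℝ :=
  sSup {L : ℝ | ∃ x ∈ v, Filter.Tendsto (fun n => dist (x n) p / r n) Filter.atTop (nhds L)}

/-- A self-stable family: a subset of `Seq(X, r̃)` any two of whose members are
mutually stable. -/
def SelfStable {X : Type*} [MetricSpace X] (r : ℕ → ℝ) (p : X) (F : Set (ℕ → X)) : Prop :=
  F ⊆ SeqInf r p ∧ ∀ x ∈ F, ∀ y ∈ F, MutuallyStable r x y

/-- A maximal self-stable set `X̃_{∞, r̃}`. -/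
def MaxSelfStable {X : Type*} [MetricSpace X] (r : ℕ → ℝ) (p : X) (F : Set (ℕ → X)) : Prop :=
  SelfStable r p F ∧ ∀ F', SelfStable r p F' → F ⊆ F' → F = F'

/-- The pretangent space `Ω^X_{∞,r̃}` attached to a maximal self-stable set `F`:
the set of `≡`-classes of members of `F`. -/
def PretangentCl {X : Type*} [MetricSpace X] (r : ℕ → ℝ) (F : Set (ℕ → X)) :
    Set (Set (ℕ → X)) :=
  {v | ∃ x ∈ F, v = {y | y ∈ F ∧ EquivSeq r x y}}

/-- A clique in the cluster graph `G_{X, r̃}`. -/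
def IsCliqueCl {X : Type*} [MetricSpace X] (r : ℕ → ℝ) (p : X)
    (C : Set (Set (ℕ → X))) : Prop :=
  C ⊆ VertexSet r p ∧ ∀ u ∈ C, ∀ v ∈ C, u ≠ v → AdjacentCl r p u v

/-- The function `F_n` of Theorem t2.2.1. -/
noncomputable def FnFun {X : Type*} [MetricSpace X] (p : X) (n : ℕ) (x : Fin n → X) : ℝ :=
  if ∀ k, x k = p then 0
  else (⨅ k, dist (x k) p) *
      (∏ k : Fin n, ∏ l : Fin n, if k < l then dist (x k) (x l) else 1) /
      (⨆ k, dist (x k) p) ^ (n * (n - 1) / 2 + 1)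

/-- The condition that `F_n(x_1, …, x_n) → 0` as `max_k d(x_k, p) → ∞`. -/
def CondF {X : Type*} [MetricSpace X] (p : X) (n : ℕ) : Prop :=
  ∀ ε : ℝ, 0 < ε → ∃ M : ℝ, ∀ x : Fin n → X,
    M ≤ (⨆ k, dist (x k) p) → |FnFun p n x| < ε

/-- The annulus `A(p, R, k) = {x : R/k ≤ d(x,p) ≤ R·k}`; `A(p, R, 1)` is the sphere
`S(p, R)`. -/
def annulus {X : Type*} [MetricSpace X] (p : X) (R k : ℝ) : Set X :=
  {x | R / k ≤ dist x p ∧ dist x p ≤ R * k}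

/-- `Ψ(k) = limsup_{R → ∞} diam(A(p, R, k)) / R` (with `diam ∅ = 0`). -/
noncomputable def Psi {X : Type*} [MetricSpace X] (p : X) (k : ℝ) : ℝ :=
  Filter.limsup (fun R : ℝ => Metric.diam (annulus p R k) / R) Filter.atTop

/-- The condition `lim_{k→1⁺} limsup_{R→∞} diam(A(p,R,k))/R
= limsup_{R→∞} diam(S(p,R))/R = 0`. -/
def CondA {X : Type*} [MetricSpace X] (p : X) : Prop :=
  Filter.Tendsto (fun k => Psi p k) (nhdsWithin 1 (Set.Ioi 1)) (nhds 0) ∧ Psi p 1 = 0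

/-!
The label `ρ⁰(v) = lim d(x_m, p) / r_m` is the key. If thin annuli have diameter `o(R)`, two
sequences with the same positive label eventually lie in one thin annulus and are equivalent, so
`n + 1` vertices have distinct labels; dropping the smallest leaves `n` sequences with distinct
positive labels `b_k`, along which `F_n` stays above a quantity tending to
`min b · ∏_{k<l} |b_k - b_l| / (max b)^(N+1) > 0` while the points go to infinity.

Conversely, tuples with `F_n ≥ ε` are spread out at their own scale `R = max_k d(x_k, p)`:
rescaling by `R` and passing to a convergent subsequence gives `n` pairwise separated sequences
at positive label, which with the root class are `n + 1` vertices. Far-apart pairs of points in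
thinner and thinner annuli, interleaved modulo `M`, give `M` vertices for every `M`.
-/

open Cardinal

section ClusterGraph

variable {X : Type*} [MetricSpace X] {r : ℕ → ℝ} {p : X}

lemma equivSeq_refl (r : ℕ → ℝ) (x : ℕ → X) : EquivSeq r x x := by
  simp [EquivSeq]

lemma EquivSeq.symm {x y : ℕ → X} (h : EquivSeq r x y) : EquivSeq r y x := by
  simpa only [EquivSeq, dist_comm] using h

lemma EquivSeq.trans (hr : ∀ m, 0 ≤ r m) {x y z : ℕ → X} (hxy : EquivSeq r x y)
    (hyz : EquivSeq r y z) : EquivSeq r x z := by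
  refine squeeze_zero (fun m => div_nonneg dist_nonneg (hr m)) (fun m => ?_)
    (by simpa using hxy.add hyz)
  rw [← add_div]
  exact div_le_div_of_nonneg_right (dist_triangle _ _ _) (hr m)

lemma classOf_eq_of_equivSeq (hr : ∀ m, 0 ≤ r m) {x y : ℕ → X} (h : EquivSeq r x y) :
    classOf r p x = classOf r p y := by
  ext z
  exact and_congr_right fun _ => ⟨h.symm.trans hr, h.trans hr⟩

lemma equivSeq_of_classOf_eq {x y : ℕ → X} (hy : y ∈ SeqInf r p)
    (h : classOf r p x = classOf r p y) : EquivSeq r x y :=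
  (h ▸ ⟨hy, equivSeq_refl r y⟩ : y ∈ classOf r p x).2

lemma not_equivSeq_of_frequently_le {x y : ℕ → X} {c : ℝ} (hc : 0 < c)
    (h : ∃ᶠ m in atTop, c ≤ dist (x m) (y m) / r m) : ¬ EquivSeq r x y := fun he =>
  (h.and_eventually (he.eventually_lt_const hc)).exists.elim fun _ hm => hm.1.not_gt hm.2

lemma EquivSeq.ratio_limit_eq (hr : ∀ m, 0 ≤ r m) {x y : ℕ → X} (h : EquivSeq r x y) {a b : ℝ}
    (hx : Tendsto (fun m => dist (x m) p / r m) atTop (𝓝 a))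
    (hy : Tendsto (fun m => dist (y m) p / r m) atTop (𝓝 b)) : a = b := by
  have hdiff : Tendsto (fun m => dist (x m) p / r m - dist (y m) p / r m) atTop (𝓝 0) := by
    refine squeeze_zero_norm (fun m => ?_) h
    rw [div_sub_div_same, Real.norm_eq_abs, abs_div, abs_of_nonneg (hr m)]
    exact div_le_div_of_nonneg_right (abs_dist_sub_le _ _ _) (hr m)
  exact sub_eq_zero.1 (tendsto_nhds_unique (hx.sub hy) hdiff)

lemma card_le_mk_vertexSet {ι : Type*} [Fintype ι] (y : ι → ℕ → X) (hy : ∀ i, y i ∈ SeqInf r p)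
    (hne : Pairwise fun i j => ¬ EquivSeq r (y i) (y j)) :
    (Fintype.card ι : Cardinal) ≤ #(VertexSet r p) := by
  have hinj : Function.Injective fun i => (⟨classOf r p (y i), y i, hy i, rfl⟩ : VertexSet r p) :=
    fun i j hij => by_contra fun h =>
      hne h (equivSeq_of_classOf_eq (hy j) (congrArg Subtype.val hij))
  simpa using Cardinal.lift_mk_le_lift_mk_of_injective hinj

end ClusterGraph

section Sequences

variable {X : Type*} [MetricSpace X] {r : ℕ → ℝ} {p : X}

lemma mem_seqInf_of_tendsto_ratio (hr : ScalingSeq r) {x : ℕ → X} {a : ℝ} (ha : 0 < a)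
    (hx : Tendsto (fun m => dist (x m) p / r m) atTop (𝓝 a)) : x ∈ SeqInf r p := by
  refine ⟨((hx.pos_mul_atTop ha hr.2).congr fun m => ?_), a, hx⟩
  exact div_mul_cancel₀ _ (hr.1 m).ne'

lemma rootClass_subset_seqInf : rootClass r p ⊆ SeqInf r p :=
  fun _ hz => ⟨hz.1, 0, hz.2⟩

lemma exists_le_dist (hX : UnboundedSpace X) (p : X) (c : ℝ) : ∃ x : X, c ≤ dist x p := by
  by_contra! h
  exact hX ((Metric.isBounded_closedBall (x := p) (r := c)).subset
    fun x _ => (h x).le)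

/-- Witness: points `w i` with `i ≤ d(w i, p)`, reindexed so that `d(w (ψ m), p) ≤ √(r m)`;
then `d → ∞` while `d / r m ≤ 1 / √(r m) → 0`. -/
lemma rootClass_nonempty (hX : UnboundedSpace X) (p : X) (hr : ScalingSeq r) :
    (rootClass r p).Nonempty := by
  choose w hw using fun i : ℕ => exists_le_dist hX p i
  set ψ : ℕ → ℕ := fun m => Nat.findGreatest (fun i => dist (w i) p ≤ √(r m)) m
  have hsqrt : Tendsto (fun m => √(r m)) atTop atTop :=
    Real.tendsto_sqrt_atTop.comp hr.2
  have hψ : Tendsto ψ atTop atTop := tendsto_atTop.2 fun i =>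
    ((eventually_ge_atTop i).and (hsqrt.eventually_ge_atTop _)).mono
      fun m hm => Nat.le_findGreatest hm.1 hm.2
  have hψ_le : ∀ᶠ m in atTop, dist (w (ψ m)) p ≤ √(r m) :=
    (hsqrt.eventually_ge_atTop (dist (w 0) p)).mono fun m hm =>
      Nat.findGreatest_spec (P := fun i => dist (w i) p ≤ √(r m)) (Nat.zero_le m) hm
  refine ⟨fun m => w (ψ m),
    tendsto_atTop_mono (fun m => hw _) (tendsto_natCast_atTop_atTop.comp hψ), ?_⟩
  refine squeeze_zero' (Eventually.of_forall fun m => div_nonneg dist_nonneg (hr.1 m).le)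
    (hψ_le.mono fun m hm => (div_le_div_of_nonneg_right hm (hr.1 m).le).trans_eq
      Real.sqrt_div_self') ?_
  simpa only [one_div, Function.comp_def] using tendsto_inv_atTop_zero.comp hsqrt

/-- Interleaving `x` and `y` along the residues modulo `M` gives `M` sequences, any two of which
are frequently `x` against `y`. -/
lemma natCast_le_mk_vertexSet_of_separated (hr : ScalingSeq r) {x y : ℕ → X} {a c : ℝ}
    (ha : 0 < a) (hc : 0 < c) (hx : Tendsto (fun m => dist (x m) p / r m) atTop (𝓝 a))
    (hy : Tendsto (fun m => dist (y m) p / r m) atTop (𝓝 a))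
    (hxy : ∀ m, c * r m ≤ dist (x m) (y m)) (M : ℕ) :
    (M : Cardinal) ≤ #(VertexSet r p) := by
  set u : Fin M → ℕ → X := fun i m => if m % M = i then x m else y m
  have hu : ∀ i, u i ∈ SeqInf r p := fun i =>
    mem_seqInf_of_tendsto_ratio hr ha <| (hx.if' (p := fun m => m % M = i) hy).congr fun m => by
      simp only [u]; split_ifs <;> rfl
  have hne : Pairwise fun i j => ¬ EquivSeq r (u i) (u j) := by
    intro i j hij
    have hfreq : ∃ᶠ m in atTop, m % M = i := frequently_atTop.2 fun b =>
      ⟨i + b * M, by nlinarith [i.pos], by simp [Nat.mod_eq_of_lt i.isLt]⟩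
    refine not_equivSeq_of_frequently_le hc (hfreq.mono fun m hm => ?_)
    have hmj : m % M ≠ j := hm ▸ fun h => hij (Fin.ext h)
    simpa only [u, if_pos hm, if_neg hmj, le_div_iff₀ (hr.1 m)] using hxy m
  simpa using card_le_mk_vertexSet u hu hne

end Sequences

section Annulus

variable {X : Type*} [MetricSpace X] {p : X}

lemma isBounded_annulus (p : X) (R k : ℝ) : Bornology.IsBounded (annulus p R k) :=
  Metric.isBounded_closedBall.subset fun _ hx => hx.2

lemma annulus_subset_annulus {R k k' : ℝ} (hR : 0 ≤ R) (hk : 0 < k) (hkk' : k ≤ k') :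
    annulus p R k ⊆ annulus p R k' := fun _ hx =>
  ⟨(div_le_div_of_nonneg_left hR hk hkk').trans hx.1,
    hx.2.trans (mul_le_mul_of_nonneg_left hkk' hR)⟩

lemma diam_annulus_div_le {R k : ℝ} (hR : 0 < R) (hk : 0 ≤ k) :
    Metric.diam (annulus p R k) / R ≤ 2 * k := by
  rw [div_le_iff₀ hR]
  refine Metric.diam_le_of_forall_dist_le (by positivity) fun x hx y hy => ?_
  linarith [dist_triangle_right x y p, hx.2, hy.2]

lemma mem_annulus_of_div_mem_Icc {x : X} {t a k : ℝ} (ht : 0 < t)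
    (hx : dist x p / t ∈ Set.Icc (a / k) (a * k)) : x ∈ annulus p (a * t) k := by
  rw [Set.mem_Icc, le_div_iff₀ ht, div_le_iff₀ ht] at hx
  exact ⟨by simpa only [div_mul_eq_mul_div, mul_comm t] using hx.1, by linarith [hx.2]⟩

lemma eventually_diam_annulus_div_nonneg (p : X) (k : ℝ) :
    ∀ᶠ R in atTop, 0 ≤ Metric.diam (annulus p R k) / R :=
  (eventually_gt_atTop 0).mono fun _ hR => div_nonneg Metric.diam_nonneg hR.le

lemma isBoundedUnder_diam_annulus (p : X) {k : ℝ} (hk : 0 ≤ k) :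
    IsBoundedUnder (· ≤ ·) atTop fun R : ℝ => Metric.diam (annulus p R k) / R :=
  isBoundedUnder_of_eventually_le
    ((eventually_gt_atTop 0).mono fun _ hR => diam_annulus_div_le hR hk)

lemma isCoboundedUnder_diam_annulus (p : X) (k : ℝ) :
    IsCoboundedUnder (· ≤ ·) atTop fun R : ℝ => Metric.diam (annulus p R k) / R :=
  (isBoundedUnder_of_eventually_ge (eventually_diam_annulus_div_nonneg p k)).isCoboundedUnder_le

lemma Psi_nonneg (p : X) {k : ℝ} (hk : 0 ≤ k) : 0 ≤ Psi p k :=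
  le_limsup_of_frequently_le (eventually_diam_annulus_div_nonneg p k).frequently
    (isBoundedUnder_diam_annulus p hk)

lemma Psi_mono (p : X) {k k' : ℝ} (hk : 0 < k) (hkk' : k ≤ k') : Psi p k ≤ Psi p k' :=
  limsup_le_limsup ((eventually_gt_atTop 0).mono fun R hR =>
      div_le_div_of_nonneg_right (Metric.diam_mono (annulus_subset_annulus hR.le hk hkk')
        (isBounded_annulus p R k')) hR.le)
    (isCoboundedUnder_diam_annulus p k) (isBoundedUnder_diam_annulus p (hk.le.trans hkk'))

lemma condA_of_forall_exists_Psi_lt (h : ∀ ε > 0, ∃ k > 1, Psi p k < ε) : CondA p := by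
  refine ⟨tendsto_order.2 ⟨fun a ha => ?_, fun ε hε => ?_⟩, ?_⟩
  · exact eventually_mem_nhdsWithin.mono fun k hk =>
      ha.trans_le (Psi_nonneg p (zero_le_one.trans (le_of_lt hk)))
  · obtain ⟨k, hk1, hk⟩ := h ε hε
    exact Filter.mem_of_superset (Ioo_mem_nhdsGT hk1) fun k' hk' =>
      (Psi_mono p (zero_lt_one.trans hk'.1) hk'.2.le).trans_lt hk
  · refine le_antisymm (le_of_forall_pos_lt_add fun ε hε => ?_) (Psi_nonneg p zero_le_one)
    obtain ⟨k, hk1, hk⟩ := h ε hε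
    simpa using (Psi_mono p one_pos hk1.le).trans_lt hk

lemma exists_lt_dist_of_lt_Psi {k c : ℝ} (hc : 0 ≤ c) (h : c < Psi p k) (T : ℝ) :
    ∃ R, T ≤ R ∧ 0 < R ∧ ∃ x ∈ annulus p R k, ∃ y ∈ annulus p R k, c * R < dist x y := by
  obtain ⟨R, hTR, hR⟩ :=
    frequently_atTop.1 (frequently_lt_of_lt_limsup (isCoboundedUnder_diam_annulus p k) h)
      (max T 1)
  have hR0 : 0 < R := zero_lt_one.trans_le ((le_max_right _ _).trans hTR)
  refine ⟨R, (le_max_left _ _).trans hTR, hR0, ?_⟩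
  by_contra! hle
  exact ((lt_div_iff₀ hR0).1 hR).not_ge
    (Metric.diam_le_of_forall_dist_le (by positivity) hle)

lemma forall_exists_Psi_lt_of_mk_vertexSet_le {n : ℕ}
    (H : ∀ r : ℕ → ℝ, ScalingSeq r → #(VertexSet r p) ≤ n) :
    ∀ ε > 0, ∃ k > 1, Psi p k < ε := by
  by_contra! h
  obtain ⟨ε, hε, hPsi⟩ := h
  set k : ℕ → ℝ := fun j => 1 + 1 / ((j : ℝ) + 1) with hk_def
  have hk1 : ∀ j, 1 < k j := fun j => lt_add_of_pos_right 1 Nat.one_div_pos_of_nat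
  have hk : Tendsto k atTop (𝓝 1) := by
    simpa [hk_def] using tendsto_one_div_add_atTop_nhds_zero_nat.const_add (1 : ℝ)
  choose R hRj hR0 x hx y hy hxy using fun j : ℕ =>
    exists_lt_dist_of_lt_Psi (half_pos hε).le ((half_lt_self hε).trans_le (hPsi _ (hk1 j))) j
  have hRs : ScalingSeq R := ⟨hR0, tendsto_atTop_mono hRj tendsto_natCast_atTop_atTop⟩
  have hratio : ∀ z : ℕ → X, (∀ j, z j ∈ annulus p (R j) (k j)) →
      Tendsto (fun j => dist (z j) p / R j) atTop (𝓝 1) := fun z hz =>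
    tendsto_of_tendsto_of_tendsto_of_le_of_le (by simpa using hk.inv₀ one_ne_zero) hk
      (fun j => by
        rw [le_div_iff₀ (hR0 j), inv_mul_eq_div]; exact (hz j).1)
      (fun j => (div_le_iff₀' (hR0 j)).2 (hz j).2)
  have hsep := natCast_le_mk_vertexSet_of_separated hRs one_pos (half_pos hε)
    (hratio x hx) (hratio y hy) (fun j => (hxy j).le) (n + 1)
  have := hsep.trans (H R hRs)
  norm_cast at this
  omega

end Annulus

section FnFun

variable {X : Type*} [MetricSpace X] {p : X} {n : ℕ}

def ltPairs (n : ℕ) : Finset (Fin n × Fin n) := Finset.univ.filter fun q => q.1 < q.2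

lemma mem_ltPairs {q : Fin n × Fin n} : q ∈ ltPairs n ↔ q.1 < q.2 := by
  simp [ltPairs]

lemma card_ltPairs (n : ℕ) : (ltPairs n).card = n * (n - 1) / 2 := by
  simpa [ltPairs, Nat.choose_two_right] using
    Finset.card_product_filter_lt (s := (Finset.univ : Finset (Fin n)))

lemma FnFun_of_exists_ne {x : Fin n → X} (hx : ∃ k, x k ≠ p) :
    FnFun p n x = (⨅ k, dist (x k) p) * (∏ q ∈ ltPairs n, dist (x q.1) (x q.2)) /
      (⨆ k, dist (x k) p) ^ ((ltPairs n).card + 1) := by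
  rw [FnFun, if_neg (not_forall.2 hx), card_ltPairs, ltPairs, Finset.prod_filter,
    ← Finset.univ_product_univ, Finset.prod_product]

lemma FnFun_nonneg (p : X) (x : Fin n → X) : 0 ≤ FnFun p n x := by
  by_cases hx : ∃ k, x k ≠ p
  · rw [FnFun_of_exists_ne hx]
    have := Real.iInf_nonneg fun k => dist_nonneg (x := x k) (y := p)
    have := Real.iSup_nonneg fun k => dist_nonneg (x := x k) (y := p)
    positivity
  · rw [FnFun, if_pos (not_exists_not.1 hx)]

lemma mul_le_of_le_mul_prod {ι : Type*} {s : Finset ι} {f : ι → ℝ} {a B c : ℝ} (hB : 0 < B)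
    (ha : 0 ≤ a) (haB : a ≤ B) (hf : ∀ i ∈ s, 0 ≤ f i ∧ f i ≤ B)
    (h : c * B ^ (s.card + 1) ≤ a * ∏ i ∈ s, f i) :
    c * B ≤ a ∧ ∀ i ∈ s, c * B ≤ f i := by
  have hprod : ∀ t ⊆ s, ∏ i ∈ t, f i ≤ B ^ t.card := fun t ht =>
    (Finset.prod_le_prod (fun i hi => (hf i (ht hi)).1) fun i hi => (hf i (ht hi)).2).trans_eq
      (Finset.prod_const B)
  refine ⟨le_of_mul_le_mul_right ?_ (pow_pos hB s.card), fun i hi => ?_⟩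
  · calc c * B * B ^ s.card = c * B ^ (s.card + 1) := by ring
      _ ≤ a * ∏ i ∈ s, f i := h
      _ ≤ a * B ^ s.card := mul_le_mul_of_nonneg_left (hprod s le_rfl) ha
  · have hcard := Finset.card_erase_add_one hi
    refine le_of_mul_le_mul_right ?_ (pow_pos hB ((s.erase i).card + 1))
    calc c * B * B ^ ((s.erase i).card + 1) = c * B ^ (s.card + 1) := by rw [← hcard]; ring
      _ ≤ a * ∏ i ∈ s, f i := h
      _ ≤ B * (f i * ∏ j ∈ s.erase i, f j) := by
        rw [Finset.mul_prod_erase s f hi]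
        exact mul_le_mul_of_nonneg_right haB (Finset.prod_nonneg fun j hj => (hf j hj).1)
      _ ≤ B * (f i * B ^ (s.erase i).card) := by
        gcongr
        · exact (hf i hi).1
        · exact hprod _ (Finset.erase_subset i s)
      _ = f i * B ^ ((s.erase i).card + 1) := by ring

lemma le_dist_of_le_FnFun {x : Fin n → X} {ε : ℝ} (hε : 0 < ε) (h : ε ≤ FnFun p n x) :
    (∀ k, ε / 2 ^ (ltPairs n).card * (⨆ k, dist (x k) p) ≤ dist (x k) p) ∧
    ∀ k l, k ≠ l → ε / 2 ^ (ltPairs n).card * (⨆ k, dist (x k) p) ≤ dist (x k) (x l) := by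
  have hx : ∃ k, x k ≠ p := by
    by_contra! hx
    rw [FnFun, if_pos hx] at h
    exact hε.not_ge h
  obtain ⟨k₀, hk₀⟩ := hx
  set R := ⨆ k, dist (x k) p
  have hle : ∀ k, dist (x k) p ≤ R := le_ciSup (Set.finite_range _).bddAbove
  have hR : 0 < R := (dist_pos.2 hk₀).trans_le (hle k₀)
  have hmin_le : (⨅ k, dist (x k) p) ≤ 2 * R :=
    (ciInf_le (Set.finite_range _).bddBelow k₀).trans ((hle k₀).trans (by linarith))
  have hpair_le : ∀ q ∈ ltPairs n, 0 ≤ dist (x q.1) (x q.2) ∧ dist (x q.1) (x q.2) ≤ 2 * R :=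
    fun q _ => ⟨dist_nonneg,
      by linarith [dist_triangle_right (x q.1) (x q.2) p, hle q.1, hle q.2]⟩
  have hmain : ε / 2 ^ ((ltPairs n).card + 1) * (2 * R) ^ ((ltPairs n).card + 1) ≤
      (⨅ k, dist (x k) p) * ∏ q ∈ ltPairs n, dist (x q.1) (x q.2) := by
    rw [FnFun_of_exists_ne ⟨k₀, hk₀⟩, le_div_iff₀ (by positivity)] at h
    calc _ = ε * R ^ ((ltPairs n).card + 1) := by field_simp; ring
      _ ≤ _ := h
  obtain ⟨hmin, hpair⟩ := mul_le_of_le_mul_prod (by positivity)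
    (Real.iInf_nonneg fun _ => dist_nonneg) hmin_le hpair_le hmain
  have hconst : ε / 2 ^ ((ltPairs n).card + 1) * (2 * R) = ε / 2 ^ (ltPairs n).card * R := by
    field_simp; ring
  rw [hconst] at hmin hpair
  refine ⟨fun k => hmin.trans (ciInf_le (Set.finite_range _).bddBelow k), fun k l hkl => ?_⟩
  rcases hkl.lt_or_gt with hkl | hlk
  · exact hpair (k, l) (mem_ltPairs.2 hkl)
  · exact (hpair (l, k) (mem_ltPairs.2 hlk)).trans_eq (dist_comm _ _)

/-- `F_n` of the points `s k ≥ 0` of the real line, seen from `0`. -/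
noncomputable def radialFn (n : ℕ) (s : Fin n → ℝ) : ℝ :=
  (⨅ k, s k) * (∏ q ∈ ltPairs n, |s q.1 - s q.2|) / (⨆ k, s k) ^ ((ltPairs n).card + 1)

lemma radialFn_div_const (s : Fin n → ℝ) {t : ℝ} (ht : 0 < t) :
    radialFn n (fun k => s k / t) = radialFn n s := by
  by_cases hs : (⨆ k, s k) = 0
  · simp only [radialFn, div_eq_mul_inv, ← Real.iSup_mul_of_nonneg (inv_nonneg.2 ht.le), hs]
    simp
  · simp only [radialFn, div_eq_mul_inv, ← Real.iSup_mul_of_nonneg (inv_nonneg.2 ht.le),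
      ← Real.iInf_mul_of_nonneg (inv_nonneg.2 ht.le), ← sub_mul, abs_mul, abs_of_pos (inv_pos.2 ht),
      Finset.prod_mul_distrib, Finset.prod_const, mul_pow, pow_succ]
    field_simp

lemma radialFn_le_FnFun {x : Fin n → X} (hx : ∃ k, x k ≠ p) {t : ℝ} (ht : 0 < t) :
    radialFn n (fun k => dist (x k) p / t) ≤ FnFun p n x := by
  rw [radialFn_div_const (fun k => dist (x k) p) ht, radialFn, FnFun_of_exists_ne hx]
  have := Real.iInf_nonneg fun k => dist_nonneg (x := x k) (y := p)
  have := Real.iSup_nonneg fun k => dist_nonneg (x := x k) (y := p)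
  gcongr with q
  exact abs_dist_sub_le (x q.1) (x q.2) p

lemma radialFn_pos [NeZero n] {b : Fin n → ℝ} (hb : ∀ k, 0 < b k)
    (hinj : Function.Injective b) : 0 < radialFn n b := by
  obtain ⟨k, hk⟩ := exists_eq_ciInf_of_finite (f := b)
  have hsup : 0 < ⨆ k, b k := (hb 0).trans_le (le_ciSup (Set.finite_range _).bddAbove 0)
  have hprod : 0 < ∏ q ∈ ltPairs n, |b q.1 - b q.2| := Finset.prod_pos fun q hq =>
    abs_pos.2 (sub_ne_zero.2 (hinj.ne (mem_ltPairs.1 hq).ne))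
  rw [radialFn, ← hk]
  have := hb k
  positivity

lemma continuousAt_radialFn [NeZero n] {b : Fin n → ℝ} (hb : (⨆ k, b k) ≠ 0) :
    ContinuousAt (radialFn n) b := by
  unfold radialFn
  simp only [← Finset.inf'_univ_eq_ciInf, ← Finset.sup'_univ_eq_ciSup] at hb ⊢
  fun_prop (disch := exact pow_ne_zero _ hb)

end FnFun

section Main

variable {X : Type*} [MetricSpace X] {p : X} {n : ℕ}

lemma exists_separated_of_not_condF (h : ¬ CondF p n) :
    ∃ r, ScalingSeq r ∧ ∃ (y : Fin n → ℕ → X) (a : Fin n → ℝ) (c : ℝ), 0 < c ∧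
      (∀ k, 0 < a k ∧ Tendsto (fun m => dist (y k m) p / r m) atTop (𝓝 (a k))) ∧
      ∀ k l, k ≠ l → ∀ m, c * r m ≤ dist (y k m) (y l m) := by
  simp only [CondF, not_forall, not_exists, not_lt, exists_prop] at h
  obtain ⟨ε, hε, hbad⟩ := h
  choose x hxR hxF using fun m : ℕ => hbad ((m : ℝ) + 1)
  set R : ℕ → ℝ := fun m => ⨆ k, dist (x m k) p
  set c := ε / 2 ^ (ltPairs n).card
  have hc : 0 < c := by positivity
  have hR : ∀ m, 0 < R m := fun m => (Nat.cast_add_one_pos m).trans_le (hxR m)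
  have hspread := fun m => le_dist_of_le_FnFun hε ((hxF m).trans_eq (abs_of_nonneg
    (FnFun_nonneg p (x m))))
  have hbox : ∀ m, (fun k => dist (x m k) p / R m) ∈ Set.Icc (fun _ => c) (fun _ => 1) :=
    fun m => ⟨fun k => (le_div_iff₀ (hR m)).2 ((hspread m).1 k),
      fun k => div_le_one_of_le₀
        (le_ciSup (f := fun k => dist (x m k) p) (Set.finite_range _).bddAbove k) (hR m).le⟩
  obtain ⟨a, ha, φ, hφ, hlim⟩ := isCompact_Icc.tendsto_subseq hbox
  refine ⟨R ∘ φ, ⟨fun m => hR _, tendsto_atTop_mono (fun m => hxR (φ m))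
    ((tendsto_atTop_add_const_right _ 1 tendsto_natCast_atTop_atTop).comp hφ.tendsto_atTop)⟩,
    fun k m => x (φ m) k, a, c, hc, fun k => ⟨hc.trans_le (ha.1 k), tendsto_pi_nhds.1 hlim k⟩,
    fun k l hkl m => (hspread (φ m)).2 k l hkl⟩

lemma condF_of_mk_vertexSet_le (hX : UnboundedSpace X)
    (H : ∀ r : ℕ → ℝ, ScalingSeq r → #(VertexSet r p) ≤ n) : CondF p n := by
  by_contra h
  obtain ⟨r, hr, y, a, c, hc, ha, hsep⟩ := exists_separated_of_not_condF h
  obtain ⟨z, hz⟩ := rootClass_nonempty hX p hr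
  set Y : Option (Fin n) → ℕ → X := fun i => i.elim z y
  have hY : ∀ i, Y i ∈ SeqInf r p := by
    rintro (_ | k)
    exacts [rootClass_subset_seqInf hz, mem_seqInf_of_tendsto_ratio hr (ha k).1 (ha k).2]
  have hroot : ∀ k, ¬ EquivSeq r z (y k) := fun k he =>
    (ha k).1.ne (he.ratio_limit_eq (fun m => (hr.1 m).le) hz.2 (ha k).2)
  have hYne : Pairwise fun i j => ¬ EquivSeq r (Y i) (Y j) := by
    rintro (_ | k) (_ | l) hkl
    · exact absurd rfl hkl
    · exact hroot l
    · exact fun he => hroot k he.symm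
    · exact not_equivSeq_of_frequently_le hc (Eventually.of_forall fun m =>
        (le_div_iff₀ (hr.1 m)).2 (hsep k l (fun h => hkl (congrArg some h)) m)).frequently
  have := (card_le_mk_vertexSet Y hY hYne).trans (H r hr)
  simp only [Fintype.card_option, Fintype.card_fin] at this
  norm_cast at this
  omega

lemma equivSeq_of_tendsto_ratio (hA : Tendsto (fun k => Psi p k) (𝓝[>] 1) (𝓝 0))
    {r : ℕ → ℝ} (hr : ScalingSeq r) {x y : ℕ → X} {a : ℝ}
    (hx : Tendsto (fun m => dist (x m) p / r m) atTop (𝓝 a))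
    (hy : Tendsto (fun m => dist (y m) p / r m) atTop (𝓝 a)) : EquivSeq r x y := by
  have hnonneg : ∀ m, 0 ≤ dist (x m) (y m) / r m := fun m =>
    div_nonneg dist_nonneg (hr.1 m).le
  rcases (ge_of_tendsto' hx fun m => div_nonneg dist_nonneg (hr.1 m).le).eq_or_lt with ha | ha
  · refine squeeze_zero hnonneg (fun m => ?_) (by simpa [← ha] using hx.add hy)
    rw [← add_div]
    exact div_le_div_of_nonneg_right (dist_triangle_right _ _ _) (hr.1 m).le
  refine tendsto_order.2
    ⟨fun b hb => .of_forall fun m => hb.trans_le (hnonneg m), fun ε hε => ?_⟩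
  obtain ⟨k, hkε, hk1⟩ :=
    ((hA.eventually_lt_const (div_pos hε ha)).and eventually_mem_nhdsWithin).exists
  have hk1 : (1 : ℝ) < k := hk1
  have hdiam : ∀ᶠ m in atTop, Metric.diam (annulus p (a * r m) k) / (a * r m) < ε / a :=
    (hr.2.const_mul_atTop ha).eventually
      (eventually_lt_of_limsup_lt hkε (isBoundedUnder_diam_annulus p (by linarith)))
  have hIcc : Set.Icc (a / k) (a * k) ∈ 𝓝 a :=
    Icc_mem_nhds (div_lt_self ha hk1) (lt_mul_of_one_lt_right ha hk1)
  filter_upwards [hdiam, hx hIcc, hy hIcc] with m hm hxm hym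
  have hxy := Metric.dist_le_diam_of_mem (isBounded_annulus p _ k)
    (mem_annulus_of_div_mem_Icc (hr.1 m) hxm) (mem_annulus_of_div_mem_Icc (hr.1 m) hym)
  rw [div_lt_div_iff₀ (mul_pos ha (hr.1 m)) ha] at hm
  rw [div_lt_iff₀ (hr.1 m)]
  nlinarith

lemma not_condF_of_tendsto_ratio [NeZero n] {r : ℕ → ℝ} (hr : ScalingSeq r)
    (y : Fin n → ℕ → X) {b : Fin n → ℝ} (hb : ∀ k, 0 < b k) (hinj : Function.Injective b)
    (hy : ∀ k, Tendsto (fun m => dist (y k m) p / r m) atTop (𝓝 (b k))) : ¬ CondF p n := by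
  intro hF
  have hpos := radialFn_pos hb hinj
  have hsup : 0 < ⨆ k, b k := (hb 0).trans_le (le_ciSup (Set.finite_range _).bddAbove 0)
  have hlim : Tendsto (fun m => radialFn n fun k => dist (y k m) p / r m) atTop
      (𝓝 (radialFn n b)) :=
    (continuousAt_radialFn hsup.ne').tendsto.comp (tendsto_pi_nhds.2 hy)
  obtain ⟨M, hM⟩ := hF _ (half_pos hpos)
  obtain ⟨m, hm, hmM⟩ := ((hlim.eventually_const_lt (half_lt_self hpos)).and
    ((mem_seqInf_of_tendsto_ratio hr (hb 0) (hy 0)).1.eventually_ge_atTop (max M 1))).exists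
  have hne : ∃ k, y k m ≠ p := ⟨0, fun h => by
    simp only [h, dist_self] at hmM; linarith [le_max_right M 1]⟩
  have hFn := hM (fun k => y k m) ((le_max_left _ _).trans
    (hmM.trans (le_ciSup (f := fun k => dist (y k m) p) (Set.finite_range _).bddAbove 0)))
  linarith [radialFn_le_FnFun hne (hr.1 m), le_abs_self (FnFun p n fun k => y k m)]

lemma mk_vertexSet_le_of_condF [NeZero n] (hF : CondF p n)
    (hA : Tendsto (fun k => Psi p k) (𝓝[>] 1) (𝓝 0)) {r : ℕ → ℝ} (hr : ScalingSeq r) :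
    #(VertexSet r p) ≤ n := by
  by_contra hlt
  obtain ⟨v⟩ : Nonempty (Fin (n + 1) ↪ VertexSet r p) := by
    rw [← Cardinal.lift_mk_le', Cardinal.lift_uzero, Cardinal.mk_fin, Cardinal.lift_natCast,
      Nat.cast_succ]
    exact Cardinal.natCast_add_one_le_iff.2 (not_le.1 hlt)
  choose x hx hvx using fun i => (v i).2
  choose a ha using fun i => (hx i).2
  have ha_inj : Function.Injective a := fun i j hij => v.injective <| Subtype.ext <| by
    rw [hvx i, hvx j]
    exact classOf_eq_of_equivSeq (fun m => (hr.1 m).le)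
      (equivSeq_of_tendsto_ratio hA hr (ha i) (hij ▸ ha j))
  obtain ⟨i₀, hi₀⟩ := Finite.exists_min a
  have ha₀ : 0 ≤ a i₀ := ge_of_tendsto' (ha i₀) fun m => div_nonneg dist_nonneg (hr.1 m).le
  exact not_condF_of_tendsto_ratio hr (fun k => x (i₀.succAbove k))
    (fun k => ha₀.trans_lt ((hi₀ _).lt_of_ne (ha_inj.ne (Fin.succAbove_ne i₀ k).symm)))
    (ha_inj.comp Fin.succAbove_right_injective) (fun k => ha _) hF

end Main

/-- Theorem t2.2.1. `|V(G_{X,r̃})| ≤ n` for every scaling sequence `r̃`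
iff `F_n → 0` and the annulus/sphere condition holds. -/
theorem card_vertexSet_le_iff {X : Type*} [MetricSpace X]
    (hX : UnboundedSpace X) (p : X) (n : ℕ) (hn : 2 ≤ n) :
    (∀ r : ℕ → ℝ, ScalingSeq r → Cardinal.mk ↥(VertexSet r p) ≤ (n : Cardinal)) ↔
      (CondF p n ∧ CondA p) := by
  have : NeZero n := ⟨by omega⟩
  constructor
  · intro H
    exact ⟨condF_of_mk_vertexSet_le hX H,
      condA_of_forall_exists_Psi_lt (forall_exists_Psi_lt_of_mk_vertexSet_le H)⟩
  · rintro ⟨hF, hA⟩ r hr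
    exact mk_vertexSet_le_of_condF hF hA.1 hr
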